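/- Suppose the WSBDF2 convolution kernels are positive semi-definite, i.e., ∑_{k=1}^n w_k ∑_{j=1}^k b_{k−j}^{(k)} w_j ≥ 0 for every real sequence w_1, …, w_n. Then the DOC kernels are also positive semi-definite: ∑_{k=1}^n w_k ∑_{j=1}^k d_{k−j}^{(k)} w_j ≥ 0 for every real sequence w_1, …, w_n. -/

import Mathlib

/-!
Put `v := D w`, the DOC convolution of `w`. The DOC kernels are built so that the WSBDF2
convolution inverts them, `B v = w`, which for the two-band WSBDF2 kernels reduces to the
recurrence `b₀⁽ᵏ⁾ v_k + b₁⁽ᵏ⁾ v_{k-1} = w_k`. Hence `⟨w, D w⟩ = ⟨B v, v⟩ ≥ 0`.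
-/

open Finset

/-- Adjacent time-step ratios `r_k = τ_k / τ_{k-1}`. -/
noncomputable def rr (τ : ℕ → ℝ) (k : ℕ) : ℝ := τ k / τ (k - 1)

/-- The WSBDF2 convolution kernels `b_j^{(n)}`:
`b_0^{(1)} = 1/τ_1`, and for `n ≥ 2`,
`b_0^{(n)} = (1 + 2θ r_n)/(τ_n (1 + r_n))`, `b_1^{(n)} = (1 - 2θ) r_n² /(τ_n (1 + r_n))`,
all other kernels vanish. -/
noncomputable def bk (θ : ℝ) (τ : ℕ → ℝ) (n j : ℕ) : ℝ :=
  if n = 1 then (if j = 0 then 1 / τ 1 else 0)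
  else if j = 0 then (1 + 2 * θ * rr τ n) / (τ n * (1 + rr τ n))
  else if j = 1 then (1 - 2 * θ) * (rr τ n) ^ 2 / (τ n * (1 + rr τ n))
  else 0

/-- The DOC (discrete orthogonal convolution) kernels: `dk θ τ n m` is `d_m^{(n)}`,
defined by `d_0^{(n)} = 1/b_0^{(n)}` and
`d_{n-k}^{(n)} = -(b_1^{(k+1)}/b_0^{(k)}) d_{n-k-1}^{(n)}` for `1 ≤ k ≤ n-1`. -/
noncomputable def dk (θ : ℝ) (τ : ℕ → ℝ) (n : ℕ) : ℕ → ℝ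
  | 0 => 1 / bk θ τ n 0
  | m + 1 => -(bk θ τ (n - m) 1 / bk θ τ (n - m - 1) 0) * dk θ τ n m

/-- `K k m` stands for the kernel `K_m^{(k)}`. -/
def kernelConv (K : ℕ → ℕ → ℝ) (w : ℕ → ℝ) (k : ℕ) : ℝ :=
  ∑ j ∈ Icc 1 k, K k (k - j) * w j

def quadForm (K : ℕ → ℕ → ℝ) (n : ℕ) (w : ℕ → ℝ) : ℝ :=
  ∑ k ∈ Icc 1 n, w k * kernelConv K w k

theorem quadForm_nonneg_of_rightInverse {B D : ℕ → ℕ → ℝ} {n : ℕ}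
    (hB : ∀ v, 0 ≤ quadForm B n v) (w : ℕ → ℝ)
    (hBD : ∀ k ∈ Icc 1 n, kernelConv B (kernelConv D w) k = w k) :
    0 ≤ quadForm D n w := by
  have : quadForm D n w = quadForm B n (kernelConv D w) :=
    sum_congr rfl fun k hk => by rw [← hBD k hk, mul_comm]
  exact this ▸ hB _

section WSBDF2

variable {θ : ℝ} {τ : ℕ → ℝ}

theorem bk_eq_zero_of_two_le {n j : ℕ} (hj : 2 ≤ j) : bk θ τ n j = 0 := by
  unfold bk
  split_ifs <;> first | rfl | omega

theorem bk_zero_pos (hθ : 0 ≤ θ) {k : ℕ} (hk : 1 ≤ k) (hτ : ∀ i, 1 ≤ i → i ≤ k → 0 < τ i) :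
    0 < bk θ τ k 0 := by
  unfold bk
  rcases eq_or_ne k 1 with rfl | hk1
  · simpa using hτ 1 le_rfl le_rfl
  · have hτk := hτ k hk le_rfl
    have hr : 0 < rr τ k := div_pos hτk (hτ (k - 1) (by omega) (by omega))
    rw [if_neg hk1, if_pos rfl]
    positivity

theorem kernelConv_bk_succ (v : ℕ → ℝ) (k : ℕ) :
    kernelConv (bk θ τ) v (k + 1) = bk θ τ (k + 1) 0 * v (k + 1) + bk θ τ (k + 1) 1 * v k := by
  rw [kernelConv, sum_Icc_succ_top (by omega), Nat.sub_self, add_comm]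
  congr 1
  rcases k with _ | m
  · simp [bk]
  · rw [sum_Icc_succ_top (by omega), Nat.sub_eq_of_eq_add (by omega : m + 1 + 1 = 1 + (m + 1)),
      sum_eq_zero fun j hj => by rw [bk_eq_zero_of_two_le (by grind), zero_mul], zero_add]

theorem bk_zero_mul_dk_succ (n : ℕ) (hb : bk θ τ n 0 ≠ 0) (m : ℕ) :
    bk θ τ n 0 * dk θ τ n (m + 1) = -bk θ τ n 1 * dk θ τ (n - 1) m := by
  induction m with
  | zero =>
    simp only [dk, Nat.sub_zero]
    field_simp
  | succ m ih =>
    simp only [dk] at ih ⊢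
    rw [show n - (m + 1) = n - 1 - m by omega]
    linear_combination (-(bk θ τ (n - 1 - m) 1 / bk θ τ (n - 1 - m - 1) 0)) * ih

theorem bk_zero_mul_kernelConv_dk_succ (w : ℕ → ℝ) {k : ℕ} (hb : bk θ τ (k + 1) 0 ≠ 0) :
    bk θ τ (k + 1) 0 * kernelConv (dk θ τ) w (k + 1)
      = w (k + 1) - bk θ τ (k + 1) 1 * kernelConv (dk θ τ) w k := by
  have hshift : ∀ j ∈ Icc 1 k, bk θ τ (k + 1) 0 * (dk θ τ (k + 1) (k + 1 - j) * w j)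
      = -bk θ τ (k + 1) 1 * (dk θ τ k (k - j) * w j) := fun j hj => by
    rw [show k + 1 - j = k - j + 1 by grind, ← mul_assoc, bk_zero_mul_dk_succ _ hb,
      Nat.add_sub_cancel, mul_assoc]
  have hdiag : bk θ τ (k + 1) 0 * dk θ τ (k + 1) 0 = 1 := by
    rw [dk, mul_one_div_cancel hb]
  rw [kernelConv, sum_Icc_succ_top (by omega), Nat.sub_self, mul_add, mul_sum,
    sum_congr rfl hshift, ← mul_sum, ← mul_assoc, hdiag, kernelConv]
  ring

theorem kernelConv_bk_kernelConv_dk (w : ℕ → ℝ) {k : ℕ} (hk : 1 ≤ k) (hb : bk θ τ k 0 ≠ 0) :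
    kernelConv (bk θ τ) (kernelConv (dk θ τ) w) k = w k := by
  obtain ⟨k, rfl⟩ := Nat.exists_eq_add_of_le' hk
  rw [kernelConv_bk_succ, bk_zero_mul_kernelConv_dk_succ w hb]
  ring

end WSBDF2

theorem doc_kernels_psd_of_wsbdf2_psd_general
    (θ : ℝ) (hθ : 1 / 2 ≤ θ ∧ θ ≤ 1)
    (N : ℕ)
    (τ : ℕ → ℝ) (hτ : ∀ k, 1 ≤ k → k ≤ N → 0 < τ k)
    (n : ℕ) (hnN : n ≤ N)
    (hpsd : ∀ w : ℕ → ℝ,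
      0 ≤ ∑ k ∈ Finset.Icc 1 n, w k * ∑ j ∈ Finset.Icc 1 k, bk θ τ k (k - j) * w j)
    (w : ℕ → ℝ) :
    0 ≤ ∑ k ∈ Finset.Icc 1 n, w k * ∑ j ∈ Finset.Icc 1 k, dk θ τ k (k - j) * w j := by
  refine quadForm_nonneg_of_rightInverse hpsd w fun k hk => ?_
  obtain ⟨hk1, hkn⟩ := mem_Icc.1 hk
  have hb : 0 < bk θ τ k 0 :=
    bk_zero_pos (by linarith [hθ.1]) hk1 fun i hi hik => hτ i hi (by omega)
  exact kernelConv_bk_kernelConv_dk w hk1 hb.ne'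

/-- If the WSBDF2 convolution kernels are positive semi-definite, i.e.
`∑_{k=1}^n w_k ∑_{j=1}^k b_{k−j}^{(k)} w_j ≥ 0` for every real sequence `w`, then the DOC
kernels are also positive semi-definite:
`∑_{k=1}^n w_k ∑_{j=1}^k d_{k−j}^{(k)} w_j ≥ 0` for every real sequence `w`. -/
theorem doc_kernels_psd_of_wsbdf2_psd
    (θ : ℝ) (hθ : 1 / 2 ≤ θ ∧ θ ≤ 1)
    (N : ℕ) (hN : 1 ≤ N)
    (τ : ℕ → ℝ) (hτ : ∀ k, 1 ≤ k → k ≤ N → 0 < τ k)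
    (n : ℕ) (hn : 1 ≤ n) (hnN : n ≤ N)
    (hpsd : ∀ w : ℕ → ℝ,
      0 ≤ ∑ k ∈ Finset.Icc 1 n, w k * ∑ j ∈ Finset.Icc 1 k, bk θ τ k (k - j) * w j)
    (w : ℕ → ℝ) :
    0 ≤ ∑ k ∈ Finset.Icc 1 n, w k * ∑ j ∈ Finset.Icc 1 k, dk θ τ k (k - j) * w j :=
  doc_kernels_psd_of_wsbdf2_psd_general θ hθ N τ hτ n hnN hpsd w
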